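/- arXiv:1905.08630 — 2 statements merged into one kernel-verified Lean document; each statement's English description precedes it below -/
import Mathlib

section
/- Let n be even with n ≥ 6, and let G be an n-vertex conjugated unicyclic graph. Let U̅_2 be the n-vertex unicyclic graph obtained from the path v_1 v_2 … v_n by adding the edge v_1 v_3 (which has a perfect matching since n is even). Then τ(G) ≤ τ(U̅_2); that is, U̅_2 has the maximal total-eccentricity index among all n-vertex conjugated unicyclic graphs. -/
/-!
Write `minSum d = Σ_{k ≤ d} min k (d - k) = ⌊d² / 4⌋`. The graph `U̅₂` has total eccentricity
`n (n - 2) - minSum (n - 2)`, certified from below by the 1-Lipschitz function `i ↦ max i 1`.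

For a tree with a diametral path of length `d`, the distance to any fixed vertex has no interior
local maximum along the path, so the `k`-th vertex of the path has eccentricity `max k (d - k)`;
hence `τ(T) ≤ n d - minSum d`, which increases with `d ≤ n`.

Deleting a cycle edge of `G` leaves a spanning tree, and `τ` only grows when passing to a spanning
tree. If that tree has diameter `n - 1` it is a Hamiltonian path plus a chord of `G`. Either the
chord closes a Hamiltonian cycle, where every eccentricity is at most `n / 2`, or deleting a
suitable path edge instead leaves a spanning tree with a vertex of degree three, whose diameter is
at most `n - 2`.
-/

open SimpleGraph Finset

/-- The eccentricity of a vertex `v` in a graph `G`: the maximum distance from `v`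
to any vertex of `G`. -/
noncomputable def ecc {V : Type} [Fintype V] (G : SimpleGraph V) (v : V) : ℕ :=
  Finset.univ.sup fun w => G.dist v w

/-- The total-eccentricity index `τ(G) = ∑_{v ∈ V(G)} e_G(v)`. -/
noncomputable def totalEcc {V : Type} [Fintype V] (G : SimpleGraph V) : ℕ :=
  ∑ v : V, ecc G v

def minSum (d : ℕ) : ℕ := ∑ k ∈ range (d + 1), min k (d - k)

lemma minSum_add_two (d : ℕ) : minSum (d + 2) = minSum d + (d + 1) := by
  have : ∀ k ∈ range (d + 1), min (k + 1) (d + 2 - (k + 1)) = min k (d - k) + 1 := by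
    intro k hk
    rw [mem_range] at hk
    omega
  rw [minSum, sum_range_succ', sum_range_succ, sum_congr rfl this, sum_add_distrib, minSum]
  simp

lemma four_mul_minSum (d : ℕ) : 4 * minSum d + d % 2 = d * d := by
  induction d using Nat.twoStepInduction with
  | zero => rfl
  | one => rfl
  | more d ih _ =>
    rw [minSum_add_two]
    have : (d + 2) * (d + 2) = d * d + 4 * d + 4 := by ring
    omega

lemma mul_add_minSum_le {n a b : ℕ} (hab : a ≤ b) (hbn : b ≤ n) :
    n * a + minSum b ≤ n * b + minSum a := by
  induction b, hab using Nat.le_induction with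
  | base => rfl
  | succ b hab ih =>
    have h₁ := four_mul_minSum b
    have h₂ := four_mul_minSum (b + 1)
    have : (b + 1) * (b + 1) = b * b + 2 * b + 1 := by ring
    have : n * (b + 1) = n * b + n := by ring
    have := ih (by omega)
    omega

lemma mul_half_add_minSum_le {n : ℕ} (hn : 6 ≤ n) :
    n * (n / 2) + minSum (n - 2) ≤ n * (n - 2) := by
  obtain ⟨m, rfl | rfl⟩ := Nat.even_or_odd' n <;> obtain ⟨k, rfl⟩ : ∃ k, m = k + 1 :=
    ⟨m - 1, by omega⟩
  · have h := four_mul_minSum (2 * k)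
    rw [Nat.mul_mod_right] at h
    rw [show 2 * (k + 1) - 2 = 2 * k by omega, Nat.mul_div_cancel_left _ two_pos]
    nlinarith
  · have h := four_mul_minSum (2 * k + 1)
    rw [Nat.mul_add_mod] at h
    rw [show 2 * (k + 1) + 1 - 2 = 2 * k + 1 by omega,
      show (2 * (k + 1) + 1) / 2 = k + 1 by omega]
    nlinarith

lemma add_le_or_add_le_of_ascent_persists {g : ℕ → ℕ} {D : ℕ}
    (hstep : ∀ j < D, g (j + 1) = g j + 1 ∨ g j = g (j + 1) + 1)
    (hascent : ∀ j, j + 2 ≤ D → g (j + 1) = g j + 1 → g (j + 2) = g (j + 1) + 1)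
    {k : ℕ} (hk : k ≤ D) : g k + k ≤ g 0 ∨ g k + (D - k) ≤ g D := by
  have hclimb : ∀ j, g (j + 1) = g j + 1 →
      ∀ i, j + i + 1 ≤ D → g (j + i + 1) = g (j + i) + 1 ∧ g (j + i + 1) = g j + i + 1 := by
    intro j hup i
    induction i with
    | zero => exact fun _ => ⟨hup, hup⟩
    | succ i ih =>
      intro hi
      obtain ⟨h₁, h₂⟩ := ih (by omega)
      have h₃ : g (j + i + 2) = g (j + i + 1) + 1 := hascent (j + i) (by omega) h₁
      exact ⟨h₃, show g (j + i + 2) = g j + (i + 1) + 1 by omega⟩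
  induction k with
  | zero => simp
  | succ k ih =>
    rcases hstep k (by omega) with hup | hdown
    · right
      have := (hclimb k hup (D - k - 1) (by omega)).2
      rw [show k + (D - k - 1) + 1 = D by omega] at this
      omega
    · have := ih (by omega)
      omega

lemma ecc_le_iff {V : Type} [Fintype V] {G : SimpleGraph V} {v : V} {D : ℕ} :
    ecc G v ≤ D ↔ ∀ w, G.dist v w ≤ D := by
  simp [ecc]

lemma dist_le_ecc {V : Type} [Fintype V] (G : SimpleGraph V) (v w : V) : G.dist v w ≤ ecc G v :=
  ecc_le_iff.mp le_rfl w

lemma totalEcc_anti {V : Type} [Fintype V] {G H : SimpleGraph V} (hHG : H ≤ G)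
    (hH : H.Connected) : totalEcc G ≤ totalEcc H :=
  sum_le_sum fun v _ => ecc_le_iff.mpr fun w => ((hH v w).dist_anti hHG).trans (dist_le_ecc H v w)

namespace SimpleGraph

variable {V : Type} {G : SimpleGraph V}

lemma exists_walk_length_of_adj_succ (f : ℕ → V) {a b : ℕ} (hab : a ≤ b)
    (h : ∀ k, a ≤ k → k < b → G.Adj (f k) (f (k + 1))) :
    ∃ w : G.Walk (f a) (f b), w.length = b - a := by
  induction b, hab using Nat.le_induction with
  | base => exact ⟨.nil, by simp⟩
  | succ b hab ih =>
    obtain ⟨w, hw⟩ := ih fun k h₁ h₂ => h k h₁ (by omega)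
    exact ⟨w.concat (h b hab (by omega)), by rw [Walk.length_concat]; omega⟩

lemma le_dist_add_of_adj_le {φ : V → ℕ} (hφ : ∀ a b, G.Adj a b → φ b ≤ φ a + 1) {a b : V}
    (hab : G.Reachable a b) : φ b ≤ φ a + G.dist a b := by
  obtain ⟨w, hw⟩ := hab.exists_walk_length_eq_dist
  rw [← hw]
  clear hw hab
  induction w with
  | nil => simp
  | cons h q ih =>
    have := hφ _ _ h
    rw [Walk.length_cons]
    omega

lemma Walk.dist_getVert_of_length_eq_dist {x y : V} (p : G.Walk x y)
    (hp : p.length = G.dist x y) {k : ℕ} (hk : k ≤ p.length) : G.dist x (p.getVert k) = k := by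
  have h₁ : G.dist x (p.getVert k) ≤ k := by simpa [hk] using dist_le (p.take k)
  have h₂ : G.dist (p.getVert k) y ≤ p.length - k := by simpa using dist_le (p.drop k)
  have h₃ := (p.take k).reachable.dist_triangle_left y
  omega

lemma Walk.IsHamiltonian.reverse [DecidableEq V] {x y : V} {p : G.Walk x y}
    (hp : p.IsHamiltonian) : p.reverse.IsHamiltonian :=
  fun v => by simpa [Walk.support_reverse] using hp v

lemma Walk.IsHamiltonian.exists_getVert_eq [DecidableEq V] {x y : V} {p : G.Walk x y}
    (hp : p.IsHamiltonian) (v : V) : ∃ k ≤ p.length, p.getVert k = v := by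
  obtain ⟨k, hk, hkl⟩ := Walk.mem_support_iff_exists_getVert.mp (hp.mem_support v)
  exact ⟨k, hkl, hk⟩

lemma Connected.injective_dist_of_card_le [Fintype V] (hG : G.Connected) {x y : V}
    (h : Fintype.card V ≤ G.dist x y + 1) : Function.Injective (G.dist x) := by
  classical
  obtain ⟨p, hp, hpl⟩ := hG.exists_path_of_dist x y
  have hham : p.IsHamiltonian :=
    Walk.isHamiltonian_iff_isPath_and_length_eq.mpr ⟨hp, by have := hp.length_lt; omega⟩
  have hindex : ∀ v, p.getVert (G.dist x v) = v := by
    intro v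
    obtain ⟨k, hk, rfl⟩ := hham.exists_getVert_eq v
    rw [p.dist_getVert_of_length_eq_dist hpl hk]
  intro v w hvw
  rw [← hindex v, ← hindex w, hvw]

lemma Connected.dist_add_two_le_card [Fintype V] (hG : G.Connected) {u a b c : V}
    (ha : G.Adj u a) (hb : G.Adj u b) (hc : G.Adj u c) (hab : a ≠ b) (hac : a ≠ c) (hbc : b ≠ c)
    (x y : V) : G.dist x y + 2 ≤ Fintype.card V := by
  by_contra! h
  have hinj := hG.injective_dist_of_card_le (x := x) (y := y) (by omega)
  have hnear : ∀ w, G.Adj u w → G.dist x w = G.dist x u + 1 ∨ G.dist x w + 1 = G.dist x u := by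
    intro w hw
    have := hinj.ne hw.ne
    rcases hw.diff_dist_adj (u := x) with h | h | h <;> omega
  have := hinj.ne hab
  have := hinj.ne hac
  have := hinj.ne hbc
  have := hnear a ha
  have := hnear b hb
  have := hnear c hc
  omega

lemma IsAcyclic.eq_of_adj_of_dist_add_one_eq (hG : G.IsAcyclic) {u v a b : V}
    (ha : G.Adj a v) (hb : G.Adj b v) (ha' : G.dist u a + 1 = G.dist u v)
    (hb' : G.dist u b + 1 = G.dist u v) : a = b := by
  have hv : G.Reachable u v := Reachable.of_dist_ne_zero (by omega)
  have geodesic : ∀ {c} (hc : G.Adj c v), G.dist u c + 1 = G.dist u v →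
      ∃ r : G.Walk u c, (r.concat hc).IsPath := by
    intro c hc hc'
    obtain ⟨r, -, hr⟩ := (hv.trans hc.symm.reachable).exists_path_of_dist
    exact ⟨r, (r.concat hc).isPath_of_length_eq_dist (by rw [Walk.length_concat]; omega)⟩
  obtain ⟨p, hp⟩ := geodesic ha ha'
  obtain ⟨q, hq⟩ := geodesic hb hb'
  have := congrArg (fun r : G.Path u v => r.1.penultimate)
    ((hG.subsingleton_path u v).elim ⟨_, hp⟩ ⟨_, hq⟩)
  simpa using this

lemma IsAcyclic.dist_getVert_le_max (hG : G.IsAcyclic) (hconn : G.Connected) {x y : V}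
    {p : G.Walk x y} (hp : p.IsPath) (hdiam : ∀ u w, G.dist u w ≤ p.length) (w : V) {k : ℕ}
    (hk : k ≤ p.length) : G.dist (p.getVert k) w ≤ max k (p.length - k) := by
  set g := fun j => G.dist w (p.getVert j)
  have hstep : ∀ j < p.length, g (j + 1) = g j + 1 ∨ g j = g (j + 1) + 1 := fun j hj =>
    (hG.dist_eq_dist_add_one_of_adj_of_reachable w (p.adj_getVert_succ hj) (hconn _ _)).symm
  -- A vertex of a tree has at most one neighbour closer to `w`.
  have hascent : ∀ j, j + 2 ≤ p.length → g (j + 1) = g j + 1 → g (j + 2) = g (j + 1) + 1 := by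
    intro j hj hup
    refine (hstep (j + 1) (by omega)).resolve_right fun hdown => ?_
    have := hG.eq_of_adj_of_dist_add_one_eq (p.adj_getVert_succ (by omega))
      (p.adj_getVert_succ (i := j + 1) (by omega)).symm hup.symm hdown.symm
    have := hp.getVert_injOn (by simp; omega) (by simp; omega) this
    omega
  have h₀ : g 0 ≤ p.length := by simpa [g] using hdiam w x
  have h₁ : g p.length ≤ p.length := by simpa [g] using hdiam w y
  have := add_le_or_add_le_of_ascent_persists hstep hascent hk
  rw [dist_comm]
  change g k ≤ _
  omega

lemma IsTree.totalEcc_add_minSum_le_of_isPath [Fintype V] (hT : G.IsTree) {x y : V}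
    {p : G.Walk x y} (hp : p.IsPath) (hdiam : ∀ u w, G.dist u w ≤ p.length) :
    totalEcc G + minSum p.length ≤ Fintype.card V * p.length := by
  classical
  set D := p.length
  have hecc : ∀ v, ecc G v ≤ D := fun v => ecc_le_iff.mpr (hdiam v)
  have hpath : minSum D ≤ ∑ v, (D - ecc G v) := calc
    minSum D ≤ ∑ k ∈ range (D + 1), (D - ecc G (p.getVert k)) := by
        refine sum_le_sum fun k hk => ?_
        rw [mem_range] at hk
        have := ecc_le_iff.mpr fun w =>
          hT.isAcyclic.dist_getVert_le_max hT.connected hp hdiam w (k := k) (by omega)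
        omega
    _ = ∑ v ∈ (range (D + 1)).image p.getVert, (D - ecc G v) := by
        rw [sum_image]
        intro a ha b hb hab
        simp only [coe_range, Set.mem_Iio] at ha hb
        exact hp.getVert_injOn (by simp; omega) (by simp; omega) hab
    _ ≤ ∑ v, (D - ecc G v) := sum_le_sum_of_subset (subset_univ _)
  have htotal : totalEcc G + ∑ v, (D - ecc G v) = Fintype.card V * D := by
    rw [totalEcc, ← sum_add_distrib, sum_congr rfl fun v _ => Nat.add_sub_cancel' (hecc v),
      sum_const, card_univ, smul_eq_mul]
  omega

lemma IsTree.totalEcc_add_minSum_le [Fintype V] (hT : G.IsTree) {D : ℕ}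
    (hdist : ∀ u w, G.dist u w ≤ D) (hD : D ≤ Fintype.card V) :
    totalEcc G + minSum D ≤ Fintype.card V * D := by
  have := hT.connected.nonempty
  obtain ⟨⟨x, y⟩, hxy⟩ := Finite.exists_max fun e : V × V => G.dist e.1 e.2
  obtain ⟨p, hp, hpl⟩ := hT.connected.exists_path_of_dist x y
  have := hT.totalEcc_add_minSum_le_of_isPath hp fun u w => hpl ▸ hxy (u, w)
  have := mul_add_minSum_le (n := Fintype.card V) (hpl ▸ hdist x y) hD
  omega

lemma totalEcc_add_minSum_le_of_isTree_le [Fintype V] {T : SimpleGraph V} (hTG : T ≤ G)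
    (hT : T.IsTree) (hdist : ∀ u w, T.dist u w + 2 ≤ Fintype.card V) :
    totalEcc G + minSum (Fintype.card V - 2) ≤ Fintype.card V * (Fintype.card V - 2) := by
  have := totalEcc_anti hTG hT.connected
  have := hT.totalEcc_add_minSum_le (D := Fintype.card V - 2) (fun u w => by
    have := hdist u w; omega) (Nat.sub_le _ _)
  omega

lemma Connected.isTree_deleteEdges [Finite V] (hG : G.Connected)
    (hsize : G.edgeSet.ncard = Nat.card V) {u v : V} (huv : G.Adj u v)
    (hbr : ¬G.IsBridge s(u, v)) : (G.deleteEdges {s(u, v)}).IsTree := by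
  rw [isTree_iff_connected_and_card, Nat.card_coe_set_eq, edgeSet_deleteEdges,
    Set.ncard_sdiff_singleton_add_one (G.mem_edgeSet.mpr huv), hsize]
  exact ⟨hG.connected_delete_edge_of_not_isBridge hbr, rfl⟩

lemma Connected.exists_adj_not_isBridge [Finite V] (hG : G.Connected)
    (hsize : G.edgeSet.ncard = Nat.card V) : ∃ u v, G.Adj u v ∧ ¬G.IsBridge s(u, v) := by
  have hcyc : ¬G.IsAcyclic := fun h => by
    have := (isTree_iff_connected_and_card.mp ⟨hG, h⟩).2
    rw [Nat.card_coe_set_eq] at this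
    omega
  simpa [isAcyclic_iff_forall_adj_isBridge] using hcyc

lemma Walk.IsHamiltonian.exists_adj_getVert_of_deleteEdges [DecidableEq V] {x y u v : V}
    (huv : G.Adj u v) {p : (G.deleteEdges {s(u, v)}).Walk x y} (hp : p.IsHamiltonian) :
    ∃ i j, i + 2 ≤ j ∧ j ≤ p.length ∧ G.Adj (p.getVert i) (p.getVert j) := by
  have hgap : ∀ k, k < p.length → s(p.getVert k, p.getVert (k + 1)) ≠ s(u, v) :=
    fun k hk h => (deleteEdges_adj.mp (p.adj_getVert_succ hk)).2 (Set.mem_singleton_iff.mpr h)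
  obtain ⟨a, ha, hau⟩ := hp.exists_getVert_eq u
  obtain ⟨b, hb, hbv⟩ := hp.exists_getVert_eq v
  have hab : a ≠ b := fun h => huv.ne (hau.symm.trans ((congrArg p.getVert h).trans hbv))
  rcases lt_or_gt_of_ne hab with h | h
  · refine ⟨a, b, ?_, hb, by rwa [hau, hbv]⟩
    by_contra
    obtain rfl : b = a + 1 := by omega
    exact hgap a (by omega) (by rw [hau, hbv])
  · refine ⟨b, a, ?_, ha, by rw [hau, hbv]; exact huv.symm⟩
    by_contra
    obtain rfl : a = b + 1 := by omega
    exact hgap b (by omega) (by rw [hau, hbv, Sym2.eq_swap])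

section Hamiltonian

variable [DecidableEq V] [Fintype V] {x y : V} {p : G.Walk x y}

lemma Walk.IsHamiltonian.totalEcc_le_of_adj (hp : p.IsHamiltonian) (hG : G.Connected)
    (hxy : G.Adj x y) : totalEcc G ≤ Fintype.card V * (Fintype.card V / 2) := by
  have hlen := hp.length_eq
  have hpath : ∀ s t, s ≤ t → t ≤ p.length → G.dist (p.getVert s) (p.getVert t) ≤ t - s := by
    intro s t hst ht
    obtain ⟨w, hw⟩ := exists_walk_length_of_adj_succ p.getVert hst fun k _ hk =>
      p.adj_getVert_succ (by omega)
    exact hw ▸ dist_le w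
  have hcycle : ∀ s t, s ≤ t → t ≤ p.length →
      G.dist (p.getVert s) (p.getVert t) ≤ Fintype.card V / 2 := by
    intro s t hst ht
    have h₁ := hpath s t hst ht
    have h₂ := hpath 0 s s.zero_le (by omega)
    have h₃ := hpath t p.length ht le_rfl
    have h₄ : G.dist (p.getVert 0) (p.getVert p.length) = 1 := by simpa using hxy
    have t₁ := hG.dist_triangle (u := p.getVert s) (v := p.getVert 0) (w := p.getVert t)
    have t₂ := hG.dist_triangle (u := p.getVert 0) (v := p.getVert p.length) (w := p.getVert t)
    rw [dist_comm] at h₂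
    rw [dist_comm (u := p.getVert p.length)] at t₂
    omega
  refine (sum_le_sum fun v _ => ecc_le_iff.mpr fun w => ?_).trans_eq
    (by rw [sum_const, card_univ, smul_eq_mul])
  obtain ⟨s, hs, rfl⟩ := hp.exists_getVert_eq v
  obtain ⟨t, ht, rfl⟩ := hp.exists_getVert_eq w
  rcases le_total s t with hst | hts
  · exact hcycle s t hst ht
  · exact dist_comm ▸ hcycle t s hts hs

lemma Walk.IsHamiltonian.totalEcc_add_minSum_le_of_adj_of_lt (hp : p.IsHamiltonian)
    (hG : G.Connected) (hsize : G.edgeSet.ncard = Fintype.card V) {i j : ℕ} (hij : i + 2 ≤ j)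
    (hj : j < p.length) (hchord : G.Adj (p.getVert i) (p.getVert j)) :
    totalEcc G + minSum (Fintype.card V - 2) ≤ Fintype.card V * (Fintype.card V - 2) := by
  set T := G.deleteEdges {s(p.getVert i, p.getVert (i + 1))}
  have hinj : ∀ a b, a ≤ p.length → b ≤ p.length → p.getVert a = p.getVert b → a = b :=
    fun a b ha hb h => hp.isPath.getVert_injOn ha hb h
  have hT : ∀ a b, a ≤ p.length → b ≤ p.length → G.Adj (p.getVert a) (p.getVert b) →
      ¬(a = i ∧ b = i + 1) → ¬(a = i + 1 ∧ b = i) → T.Adj (p.getVert a) (p.getVert b) := by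
    intro a b ha hb hab h₁ h₂
    refine deleteEdges_adj.mpr ⟨hab, ?_⟩
    rw [Set.mem_singleton_iff, Sym2.eq_iff]
    rintro (⟨ha', hb'⟩ | ⟨ha', hb'⟩)
    · exact h₁ ⟨hinj _ _ ha (by omega) ha', hinj _ _ hb (by omega) hb'⟩
    · exact h₂ ⟨hinj _ _ ha (by omega) ha', hinj _ _ hb (by omega) hb'⟩
  have hbr : ¬G.IsBridge s(p.getVert i, p.getVert (i + 1)) := by
    rw [isBridge_iff, not_not]
    obtain ⟨w, -⟩ := exists_walk_length_of_adj_succ (G := T) p.getVert (show i + 1 ≤ j by omega)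
      fun k hk₁ hk₂ => hT k (k + 1) (by omega) (by omega) (p.adj_getVert_succ (by omega))
        (by omega) (by omega)
    exact (hT i j (by omega) hj.le hchord (by omega) (by omega)).reachable.trans ⟨w.reverse⟩
  have hTtree := hG.isTree_deleteEdges (by rwa [Nat.card_eq_fintype_card])
    (p.adj_getVert_succ (by omega)) hbr
  obtain ⟨m, rfl⟩ : ∃ m, j = m + 1 := ⟨j - 1, by omega⟩
  -- In `T` the vertex `m + 1` keeps its three neighbours `m`, `m + 2` and `i`.
  have hprev := hT (m + 1) m (by omega) (by omega) (p.adj_getVert_succ (by omega)).symm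
    (by omega) (by omega)
  have hnext := hT (m + 1) (m + 2) (by omega) (by omega) (p.adj_getVert_succ (by omega))
    (by omega) (by omega)
  have hback := hT (m + 1) i (by omega) (by omega) hchord.symm (by omega) (by omega)
  refine totalEcc_add_minSum_le_of_isTree_le (deleteEdges_le _) hTtree fun a b =>
    hTtree.connected.dist_add_two_le_card hprev hnext hback ?_ ?_ ?_ a b <;>
    intro h <;> have := hinj _ _ (by omega) (by omega) h <;> omega

lemma Walk.IsHamiltonian.totalEcc_add_minSum_le_of_adj (hp : p.IsHamiltonian)
    (hG : G.Connected) (hsize : G.edgeSet.ncard = Fintype.card V) (hn : 6 ≤ Fintype.card V)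
    {i j : ℕ} (hij : i + 2 ≤ j) (hj : j ≤ p.length)
    (hchord : G.Adj (p.getVert i) (p.getVert j)) :
    totalEcc G + minSum (Fintype.card V - 2) ≤ Fintype.card V * (Fintype.card V - 2) := by
  rcases hj.lt_or_eq with hj | rfl
  · exact hp.totalEcc_add_minSum_le_of_adj_of_lt hG hsize hij hj hchord
  rcases Nat.eq_zero_or_pos i with rfl | hi
  · have := hp.totalEcc_le_of_adj hG (by simpa using hchord)
    have := mul_half_add_minSum_le hn
    omega
  · -- Reversing the path moves the chord `(i, p.length)` to `(0, p.length - i)`.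
    refine hp.reverse.totalEcc_add_minSum_le_of_adj_of_lt hG hsize (i := 0) (j := p.length - i)
      (by simp; omega) (by simp; omega) ?_
    simpa [Walk.getVert_reverse, show p.length - (p.length - i) = i by omega] using hchord.symm

end Hamiltonian

theorem Connected.totalEcc_add_minSum_le_of_ncard_edgeSet_eq [Fintype V] (hG : G.Connected)
    (hsize : G.edgeSet.ncard = Fintype.card V) (hn : 6 ≤ Fintype.card V) :
    totalEcc G + minSum (Fintype.card V - 2) ≤ Fintype.card V * (Fintype.card V - 2) := by
  classical
  have hsize' : G.edgeSet.ncard = Nat.card V := by rwa [Nat.card_eq_fintype_card]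
  obtain ⟨u, v, huv, hbr⟩ := hG.exists_adj_not_isBridge hsize'
  have hT := hG.isTree_deleteEdges hsize' huv hbr
  by_cases hdist : ∀ a b, (G.deleteEdges {s(u, v)}).dist a b + 2 ≤ Fintype.card V
  · exact totalEcc_add_minSum_le_of_isTree_le (deleteEdges_le _) hT hdist
  push Not at hdist
  obtain ⟨a, b, hab⟩ := hdist
  obtain ⟨p, hp, hpl⟩ := hT.connected.exists_path_of_dist a b
  have hham : p.IsHamiltonian :=
    Walk.isHamiltonian_iff_isPath_and_length_eq.mpr ⟨hp, by have := hp.length_lt; omega⟩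
  obtain ⟨i, j, hij, hj, hchord⟩ := hham.exists_adj_getVert_of_deleteEdges huv
  have hhamG := hham.map (Hom.ofLE (deleteEdges_le _)) Function.bijective_id
  exact hhamG.totalEcc_add_minSum_le_of_adj hG hsize hn hij (by simpa using hj)
    (by simpa using hchord)

end SimpleGraph

/-- The graph `U̅₂`, with vertices `v₁, …, vₙ` numbered `0, …, n - 1`. -/
def tadpole (n : ℕ) (hn : 2 < n) : SimpleGraph (Fin n) :=
  pathGraph n ⊔ fromEdgeSet {s(⟨0, by omega⟩, ⟨2, hn⟩)}

lemma sum_range_tadpole_add_minSum {n : ℕ} (hn : 2 ≤ n) :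
    ∑ k ∈ range n, max (max k 1 - 1) (n - 1 - max k 1) + minSum (n - 2) = n * (n - 2) := by
  obtain ⟨m, rfl⟩ : ∃ m, n = m + 2 := ⟨n - 2, by omega⟩
  have hterm : ∀ k ∈ range (m + 1),
      max (max (k + 1) 1 - 1) (m + 2 - 1 - max (k + 1) 1) + min k (m - k) = m := by
    intro k hk
    rw [mem_range] at hk
    omega
  rw [sum_range_succ', Nat.add_sub_cancel, minSum, add_right_comm, ← sum_add_distrib,
    sum_congr rfl hterm, sum_const, card_range, smul_eq_mul]
  rw [show max (max 0 1 - 1) (m + 2 - 1 - max 0 1) = m by omega]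
  ring

lemma mul_sub_two_le_totalEcc_tadpole_add_minSum {n : ℕ} (hn : 2 < n) :
    n * (n - 2) ≤ totalEcc (tadpole n hn) + minSum (n - 2) := by
  have hφ : ∀ a b, (tadpole n hn).Adj a b → max b.val 1 ≤ max a.val 1 + 1 := by
    intro a b hab
    rcases hab with hab | hab
    · rw [pathGraph_adj] at hab
      omega
    · rw [fromEdgeSet_adj, Set.mem_singleton_iff, Sym2.eq_iff] at hab
      rcases hab.1 with ⟨rfl, rfl⟩ | ⟨rfl, rfl⟩ <;> simp
  have hconn : (tadpole n hn).Connected := by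
    obtain ⟨m, rfl⟩ : ∃ m, n = m + 1 := ⟨n - 1, by omega⟩
    exact (pathGraph_connected m).mono le_sup_left
  have hecc : ∀ i : Fin n,
      max (max i.val 1 - 1) (n - 1 - max i.val 1) ≤ ecc (tadpole n hn) i := by
    intro i
    have h₁ := le_dist_add_of_adj_le hφ (hconn ⟨0, by omega⟩ i)
    have h₂ := le_dist_add_of_adj_le hφ (hconn i ⟨n - 1, by omega⟩)
    have h₃ := dist_le_ecc (tadpole n hn) i ⟨0, by omega⟩
    have h₄ := dist_le_ecc (tadpole n hn) i ⟨n - 1, by omega⟩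
    rw [SimpleGraph.dist_comm] at h₁
    simp only at h₁ h₂
    omega
  have := sum_range_tadpole_add_minSum (n := n) (by omega)
  rw [← Fin.sum_univ_eq_sum_range] at this
  have := sum_le_sum fun i (_ : i ∈ univ) => hecc i
  rw [totalEcc]
  omega

/-- Among all `n`-vertex conjugated unicyclic graphs (`n` even, `n ≥ 6`), the graph
`U̅₂` obtained from the path `v₁v₂⋯vₙ` by adding the edge `v₁v₃` has the maximal
total-eccentricity index. -/
theorem maximal_conjugated_unicyclic (n : ℕ) (hn : 6 ≤ n)
    (V : Type) [Fintype V] (G : SimpleGraph V)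
    (hcard : Fintype.card V = n)
    (hconn : G.Connected) (hsize : G.edgeSet.ncard = n) :
    totalEcc G ≤
      totalEcc (pathGraph n ⊔
        fromEdgeSet {s((⟨0, by omega⟩ : Fin n), (⟨2, by omega⟩ : Fin n))}) := by
  subst hcard
  show totalEcc G ≤ totalEcc (tadpole _ (by omega))
  have := hconn.totalEcc_add_minSum_le_of_ncard_edgeSet_eq hsize hn
  have := mul_sub_two_le_totalEcc_tadpole_add_minSum (n := Fintype.card V) (by omega)
  omega
end

section
/- For every even n ≥ 10 there exists an n-vertex conjugated bicyclic graph G with τ(G) = 7n/2 − 4; hence the lower bound 7n/2 − 4 for the total-eccentricity index of n-vertex conjugated bicyclic graphs is attained. (Such a graph B̅_1 is obtained from the spider with center v and n/2 legs, of which n/2 − 1 legs have length 2 and one leg has length 1, by adding two edges between v and two distinct vertices at distance 2 from v.) -/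
open SimpleGraph Finset

/-!
Label `B̄₁` on `Fin n` by centre `0`, pendant neighbour `1`, legs `0 – 2j – 2j+1` (`j ≥ 1`) and
added edges `0 – 3`, `0 – 5`. Every vertex `x` is within distance `depth x ≤ 2` of the centre.
The ends `t ≥ 7` of the legs untouched by the added edges are reached only through the centre,
so such a `t` on a leg other than that of `x` is at distance `depth x + 2` from `x`. Hence
`e(x) = depth x + 2` and `τ = 2n + (n/2 + 2) + 2(n/2 - 3) = 7n/2 - 4`.
The spider has the `n - 1` edges `{x, parent x}`, so `B̄₁` has `n + 1`, and pairing `2j` with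
`2j + 1` is a perfect matching.
-/

namespace SimpleGraph

variable {V : Type} {G : SimpleGraph V}

lemma Reachable.succ_le_dist_of_forall_adj {u v : V} {k : ℕ} (h : G.Reachable u v)
    (huv : u ≠ v) (hadj : ∀ w, G.Adj u w → k ≤ G.dist w v) : k + 1 ≤ G.dist u v := by
  obtain ⟨p, hp⟩ := h.exists_walk_length_eq_dist
  cases p with
  | nil => exact absurd rfl huv
  | cons hw q => simpa [← hp] using hadj _ hw |>.trans (dist_le q)

lemma exists_isPerfectMatching_of_involutive {σ : V → V} (hσ : Function.Involutive σ)
    (hadj : ∀ v, G.Adj v (σ v)) : ∃ M : G.Subgraph, M.IsPerfectMatching := by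
  let M : G.Subgraph :=
    { verts := Set.univ
      Adj v w := w = σ v
      adj_sub := by rintro v _ rfl; exact hadj v
      edge_vert := fun _ => Set.mem_univ _
      symm := ⟨fun v w h => by rw [h, hσ]⟩ }
  exact ⟨M, Subgraph.isPerfectMatching_iff.2 fun _ => existsUnique_eq⟩

end SimpleGraph

lemma ecc_eq_of_dist_le_of_le_dist {V : Type} [Fintype V] {G : SimpleGraph V} {v w : V} {k : ℕ}
    (hle : ∀ x, G.dist v x ≤ k) (hw : k ≤ G.dist v w) : ecc G v = k :=
  le_antisymm (Finset.sup_le fun x _ => hle x) (hw.trans (Finset.le_sup (Finset.mem_univ w)))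

namespace ConjugatedBicyclic

/-- `b` is the child of `a` in the spider, or `a b` is one of the added edges. -/
def Arc (a b : ℕ) : Prop :=
  a = 0 ∧ (b = 1 ∨ b = 3 ∨ b = 5 ∨ (b % 2 = 0 ∧ b ≠ 0)) ∨ (a % 2 = 0 ∧ a ≠ 0 ∧ b = a + 1)

def extremalGraph (n : ℕ) : SimpleGraph (Fin n) := fromRel fun a b => Arc a b

def IsFarLeaf (x : ℕ) : Prop := x % 2 = 1 ∧ 7 ≤ x

instance : DecidablePred IsFarLeaf := fun _ => inferInstanceAs (Decidable (_ ∧ _))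

def depth (x : ℕ) : ℕ := if x = 0 then 0 else if IsFarLeaf x then 2 else 1

variable {n : ℕ}

lemma extremalGraph_adj {a b : Fin n} : (extremalGraph n).Adj a b ↔ Arc a b ∨ Arc b a := by
  simp only [extremalGraph, fromRel_adj, Arc, ne_eq, Fin.ext_iff, and_iff_right_iff_imp]
  omega

lemma center_adj (hn : 0 < n) {w : Fin n} (h0 : w.val ≠ 0) (hw : ¬ IsFarLeaf w) :
    (extremalGraph n).Adj ⟨0, hn⟩ w := by
  rw [extremalGraph_adj]; simp only [Arc, IsFarLeaf, true_and] at *; omega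

lemma pred_adj_of_isFarLeaf {w : Fin n} (hw : IsFarLeaf w) :
    (extremalGraph n).Adj ⟨w - 1, by omega⟩ w := by
  rw [extremalGraph_adj]; simp only [Arc, IsFarLeaf] at *; omega

lemma exists_walk_center (hn : 0 < n) (w : Fin n) :
    ∃ p : (extremalGraph n).Walk ⟨0, hn⟩ w, p.length ≤ depth w := by
  unfold depth
  split_ifs with h0 hw
  · obtain rfl : w = ⟨0, hn⟩ := Fin.ext h0
    exact ⟨.nil, le_rfl⟩
  · have hpred : ¬ IsFarLeaf (w - 1) := by unfold IsFarLeaf at *; omega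
    exact ⟨.cons (center_adj hn (show w.val - 1 ≠ 0 by unfold IsFarLeaf at hw; omega) hpred)
      (.cons (pred_adj_of_isFarLeaf hw) .nil), le_rfl⟩
  · exact ⟨.cons (center_adj hn h0 hw) .nil, le_rfl⟩

lemma extremalGraph_connected (hn : 0 < n) : (extremalGraph n).Connected :=
  (connected_iff_exists_forall_reachable _).2
    ⟨⟨0, hn⟩, fun w => (exists_walk_center hn w).elim fun p _ => p.reachable⟩

lemma dist_center_le (hn : 0 < n) (w : Fin n) : (extremalGraph n).dist ⟨0, hn⟩ w ≤ depth w :=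
  (exists_walk_center hn w).elim fun p hp => (dist_le p).trans hp

lemma depth_le_two (x : ℕ) : depth x ≤ 2 := by
  unfold depth; split_ifs <;> omega

lemma three_le_dist {v t : Fin n} (ht : IsFarLeaf t) (hv0 : v.val ≠ 0) (hvt : v.val ≠ t.val)
    (hvt' : v.val + 1 ≠ t.val) : 3 ≤ (extremalGraph n).dist v t := by
  have hG := extremalGraph_connected (n := n) (by omega)
  refine (hG v t).succ_le_dist_of_forall_adj (Fin.ne_of_val_ne hvt) fun w hvw => ?_
  refine hG.one_lt_dist_of_ne_of_not_adj ?_ ?_ <;>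
    simp only [ne_eq, Fin.ext_iff, extremalGraph_adj, Arc, IsFarLeaf] at * <;> omega

lemma depth_add_two_le_dist {v t : Fin n} (ht : IsFarLeaf t) (hvt : v.val ≠ t.val)
    (hvt' : v.val + 1 ≠ t.val) : depth v + 2 ≤ (extremalGraph n).dist v t := by
  have hG := extremalGraph_connected (n := n) (by omega)
  unfold depth
  split_ifs with hv0 hv
  · refine hG.one_lt_dist_of_ne_of_not_adj (Fin.ne_of_val_ne hvt) ?_
    simp only [extremalGraph_adj, Arc, IsFarLeaf] at *; omega
  · refine (hG v t).succ_le_dist_of_forall_adj (Fin.ne_of_val_ne hvt) fun w hvw => ?_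
    have hw : w.val = v.val - 1 := by simp only [extremalGraph_adj, Arc, IsFarLeaf] at *; omega
    simp only [IsFarLeaf] at ht hv
    apply three_le_dist ht <;> omega
  · exact three_le_dist ht hv0 hvt hvt'

lemma ecc_extremalGraph (hn : 10 ≤ n) (v : Fin n) : ecc (extremalGraph n) v = depth v + 2 := by
  have hG := extremalGraph_connected (n := n) (by omega)
  obtain ⟨t, htn, ht, hvt, hvt'⟩ : ∃ t, t < n ∧ IsFarLeaf t ∧ v.val ≠ t ∧ v.val + 1 ≠ t := by
    unfold IsFarLeaf
    by_cases hv : v.val = 6 ∨ v.val = 7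
    exacts [⟨9, by omega⟩, ⟨7, by omega⟩]
  refine ecc_eq_of_dist_le_of_le_dist (fun x => ?_)
    (depth_add_two_le_dist (t := ⟨t, htn⟩) ht hvt hvt')
  let c : Fin n := ⟨0, by omega⟩
  calc (extremalGraph n).dist v x ≤ (extremalGraph n).dist v c + (extremalGraph n).dist c x :=
        hG.dist_triangle
    _ = (extremalGraph n).dist c v + (extremalGraph n).dist c x := by
        rw [SimpleGraph.dist_comm]
    _ ≤ depth v + 2 :=
        add_le_add (dist_center_le _ v) ((dist_center_le _ x).trans (depth_le_two x))

lemma sum_range_depth_add_two {k : ℕ} (hk : 3 ≤ k) :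
    ∑ x ∈ range (2 * k), (depth x + 2) + 4 = 7 * k := by
  induction k, hk using Nat.le_induction with
  | base => decide
  | succ k hk ih =>
    rw [show 2 * (k + 1) = 2 * k + 1 + 1 by ring, sum_range_succ, sum_range_succ]
    have h1 : depth (2 * k) = 1 := by
      rw [depth, if_neg (by omega), if_neg (by simp only [IsFarLeaf]; omega)]
    have h2 : depth (2 * k + 1) = 2 := by
      rw [depth, if_neg (by omega), if_pos (by simp only [IsFarLeaf]; omega)]
    omega

lemma totalEcc_extremalGraph (hn : 10 ≤ n) (hev : Even n) :
    2 * totalEcc (extremalGraph n) + 8 = 7 * n := by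
  obtain ⟨k, rfl⟩ := hev
  have := sum_range_depth_add_two (k := k) (by omega)
  rw [totalEcc, Fintype.sum_congr _ _ (ecc_extremalGraph hn),
    Fin.sum_univ_eq_sum_range (fun x => depth x + 2), ← two_mul]
  omega

def parent (x : Fin n) : Fin n :=
  ⟨if x.val % 2 = 1 ∧ 3 ≤ x.val then x.val - 1 else 0, by split <;> omega⟩

lemma injective_mk_parent : Function.Injective fun x : Fin n => s(x, parent x) := by
  intro x y hxy
  simp only [Sym2.eq_iff, parent, Fin.ext_iff] at hxy
  split_ifs at hxy <;> omega

lemma edgeSet_extremalGraph (hn : 6 ≤ n) : (extremalGraph n).edgeSet =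
    ↑(insert s((⟨0, by omega⟩ : Fin n), ⟨3, by omega⟩) (insert s(⟨0, by omega⟩, ⟨5, by omega⟩)
      ((univ.erase ⟨0, by omega⟩).image fun x => s(x, parent x)))) := by
  ext e
  induction e using Sym2.ind with
  | _ a b =>
    simp only [mem_edgeSet, extremalGraph_adj, coe_insert, coe_image, Set.mem_insert_iff,
      Set.mem_image, coe_erase, Set.mem_sdiff, Set.mem_singleton_iff, coe_univ, Set.mem_univ,
      true_and, Sym2.eq_iff, and_or_left, exists_or, and_left_comm (a := _ ≠ _), exists_eq_left]
    simp only [ne_eq, Fin.ext_iff, parent, Arc]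
    split_ifs <;> omega

lemma ncard_edgeSet_extremalGraph (hn : 6 ≤ n) : (extremalGraph n).edgeSet.ncard = n + 1 := by
  rw [edgeSet_extremalGraph hn, Set.ncard_coe_finset, card_insert_of_notMem, card_insert_of_notMem,
    card_image_of_injective _ injective_mk_parent, card_erase_of_mem (mem_univ _), card_univ,
    Fintype.card_fin]
  · omega
  all_goals
    simp only [mem_insert, mem_image, mem_erase, mem_univ, and_true, Sym2.eq_iff, Fin.ext_iff,
      parent, not_or, not_exists, not_and]
    grind

lemma exists_isPerfectMatching_extremalGraph (hev : Even n) :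
    ∃ M : (extremalGraph n).Subgraph, M.IsPerfectMatching := by
  obtain ⟨k, rfl⟩ := hev
  refine exists_isPerfectMatching_of_involutive
    (σ := fun x => ⟨if x.val % 2 = 0 then x + 1 else x - 1, by split <;> omega⟩) ?_ fun x => ?_
  · intro x
    simp only [Fin.ext_iff]
    split_ifs <;> omega
  · rw [extremalGraph_adj]; simp only [Arc]; split_ifs <;> omega

end ConjugatedBicyclic

open ConjugatedBicyclic

/-- For every even `n ≥ 10`, there is an `n`-vertex conjugated bicyclic graph whose
total-eccentricity index equals `7n/2 - 4`; i.e. the lower bound is attained. -/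
theorem conjugated_bicyclic_lower_bound_attained (n : ℕ) (hn : 10 ≤ n) (hev : Even n) :
    ∃ G : SimpleGraph (Fin n), G.Connected ∧ G.edgeSet.ncard = n + 1 ∧
      (∃ M : G.Subgraph, M.IsPerfectMatching) ∧
      (totalEcc G : ℚ) = 7 * n / 2 - 4 := by
  refine ⟨extremalGraph n, extremalGraph_connected (by omega),
    ncard_edgeSet_extremalGraph (by omega), exists_isPerfectMatching_extremalGraph hev, ?_⟩
  have h : (2 * totalEcc (extremalGraph n) + 8 : ℚ) = 7 * n := by
    exact_mod_cast totalEcc_extremalGraph hn hev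
  linarith
end
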